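/- Let T be the unilateral weighted shift on ℓ²(ℕ) with positive weights α_n > 0 for all n ≥ 1 (i.e., T e_n = α_n e_{n+1}). Then T is not a complex symmetric operator. -/

import Mathlib

open ContinuousLinearMap

noncomputable section

def IsConjugation {H : Type*} [NormedAddCommGroup H] [InnerProductSpace ℂ H]
    (C : H → H) : Prop :=
  (∀ x y, C (x + y) = C x + C y) ∧
  (∀ (a : ℂ) (x : H), C (a • x) = (starRingEnd ℂ a) • C x) ∧
  (∀ x, ‖C x‖ = ‖x‖) ∧
  (∀ x, C (C x) = x)

def IsCSO {H : Type*} [NormedAddCommGroup H] [InnerProductSpace ℂ H]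
    [CompleteSpace H] (T : H →L[ℂ] H) : Prop :=
  ∃ C : H → H, IsConjugation C ∧ ∀ x, T x = C (adjoint T (C x))

/-- The space `ℓ²(ℕ)`. -/
abbrev L2 : Type := lp (fun _ : ℕ => ℂ) 2

/-- The standard orthonormal basis vectors of `ℓ²(ℕ)`. -/
def e (n : ℕ) : L2 := lp.single 2 n 1

/-!
A conjugation `C` with `T = C T* C` maps `ker T*` isometrically into `ker T`. For the weighted
shift, `T*` is the backward shift `(T* y) m = α m * y (m + 1)`, which kills `e 0`, while
`(T x) (n + 1) = α n * x n` makes `T` injective once every weight is nonzero. So `C (e 0)` would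
be a unit vector in the trivial kernel of `T`.
-/

section Conjugation

variable {H : Type*} [NormedAddCommGroup H] [InnerProductSpace ℂ H] {C : H → H}

theorem IsConjugation.map_zero (hC : IsConjugation C) : C 0 = 0 := by
  simpa using hC.1 0 0

theorem IsConjugation.eq_zero_of_apply_eq_zero (hC : IsConjugation C) {x : H} (hx : C x = 0) :
    x = 0 := by
  rw [← norm_eq_zero, ← hC.2.2.1, hx, norm_zero]

theorem IsCSO.eq_zero_of_adjoint_apply_eq_zero [CompleteSpace H] {T : H →L[ℂ] H} (hT : IsCSO T)
    (hinj : ∀ x, T x = 0 → x = 0) {x : H} (hx : adjoint T x = 0) : x = 0 := by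
  obtain ⟨C, hC, hTC⟩ := hT
  refine hC.eq_zero_of_apply_eq_zero (hinj _ ?_)
  rw [hTC, hC.2.2.2, hx, hC.map_zero]

end Conjugation

theorem e_apply (n m : ℕ) : e n m = if m = n then 1 else 0 := by
  simp [e, lp.single_apply, Pi.single_apply]

theorem e_ne_zero (n : ℕ) : e n ≠ 0 := by
  rw [← norm_ne_zero_iff, e, lp.norm_single (by norm_num)]
  simp

theorem inner_e_left (n : ℕ) (x : L2) : inner ℂ (e n) x = x n := by
  simp [e, lp.inner_single_left]

section WeightedShift

variable {α : ℕ → ℝ} {T : L2 →L[ℂ] L2}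

theorem adjoint_weightedShift_apply (hT : ∀ n, T (e n) = (α n : ℂ) • e (n + 1)) (y : L2)
    (m : ℕ) : adjoint T y m = α m * y (m + 1) := by
  rw [← inner_e_left, adjoint_inner_right, hT, inner_smul_left, inner_e_left]
  simp

theorem adjoint_weightedShift_e_zero (hT : ∀ n, T (e n) = (α n : ℂ) • e (n + 1)) :
    adjoint T (e 0) = 0 := by
  ext m
  simp [adjoint_weightedShift_apply hT, e_apply]

theorem adjoint_weightedShift_e_succ (hT : ∀ n, T (e n) = (α n : ℂ) • e (n + 1)) (n : ℕ) :
    adjoint T (e (n + 1)) = (α n : ℂ) • e n := by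
  ext m
  rw [adjoint_weightedShift_apply hT, lp.coeFn_smul, Pi.smul_apply, e_apply, e_apply]
  by_cases h : m = n <;> simp [h]

theorem weightedShift_apply_succ (hT : ∀ n, T (e n) = (α n : ℂ) • e (n + 1)) (x : L2) (n : ℕ) :
    T x (n + 1) = α n * x n := by
  rw [← inner_e_left, ← adjoint_inner_left, adjoint_weightedShift_e_succ hT, inner_smul_left,
    inner_e_left]
  simp

theorem eq_zero_of_weightedShift_apply_eq_zero (hT : ∀ n, T (e n) = (α n : ℂ) • e (n + 1))
    (hα : ∀ n, α n ≠ 0) {x : L2} (hx : T x = 0) : x = 0 := by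
  ext n
  have h : (α n : ℂ) * x n = 0 := by rw [← weightedShift_apply_succ hT, hx]; rfl
  simpa [hα n] using h

end WeightedShift

/-- An irreducible unilateral weighted shift (all weights positive) is not a
complex symmetric operator. -/
theorem irreducible_weighted_shift_not_CSO (α : ℕ → ℝ) (hα : ∀ n, 0 < α n)
    (T : L2 →L[ℂ] L2) (hT : ∀ n, T (e n) = (α n : ℂ) • e (n + 1)) :
    ¬ IsCSO T := fun hCSO =>
  e_ne_zero 0 <| hCSO.eq_zero_of_adjoint_apply_eq_zero
    (fun _ => eq_zero_of_weightedShift_apply_eq_zero hT fun n => (hα n).ne')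
    (adjoint_weightedShift_e_zero hT)
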